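/- arXiv:1801.07029 — 7 statements merged into one kernel-verified Lean document; each statement's English description precedes it below -/
import Mathlib

section
/- For every odd integer P ≥ 3 there exists a routed network that admits a (2,1)-periodic assignment but admits no (P,1)-periodic assignment; hence the existence of a (P,τ)-periodic assignment of a routed network is not monotone in the period P. -/
/-- The set of `τ` consecutive residues modulo `P` starting at `t`. -/
def slotSet (P τ : ℕ) (t : ℤ) : Set (ZMod P) :=
  {s | ∃ k : ℕ, k < τ ∧ s = ((t + k : ℤ) : ZMod P)}

/-- The arcs of a route: its pairs of consecutive vertices. -/
def arcs {V : Type*} (r : List V) : List (V × V) := r.zip r.tail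

/-- Latency of the `i`-th vertex of the route `r`: the sum of the weights of the
first `i` arcs of `r`. -/
def latency {V : Type*} (ω : V → V → ℕ) (r : List V) (i : ℕ) : ℕ :=
  (((arcs r).map fun p => ω p.1 p.2).take i).sum

/-- Two routes with given offsets collide if they share an arc `(u, v)` and
their slot sets at `u` intersect. -/
def Collide {V : Type*} (ω : V → V → ℕ) (P τ : ℕ)
    (r₁ r₂ : List V) (m₁ m₂ : ℤ) : Prop :=
  ∃ i j : ℕ, i + 1 < r₁.length ∧ j + 1 < r₂.length ∧
    r₁[i]? = r₂[j]? ∧ r₁[i + 1]? = r₂[j + 1]? ∧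
    (slotSet P τ (m₁ + latency ω r₁ i) ∩ slotSet P τ (m₂ + latency ω r₂ j)).Nonempty

/-- A `(P,τ)`-periodic assignment: offsets such that no two distinct routes collide. -/
def IsPeriodicAssignment {V ι : Type*} (ω : V → V → ℕ) (routes : ι → List V)
    (P τ : ℕ) (m : ι → ℤ) : Prop :=
  ∀ a b : ι, a ≠ b → ¬ Collide ω P τ (routes a) (routes b) (m a) (m b)

/-- A routed network: a finite vertex type, a weight function, and a finite
family of routes, each a list of pairwise distinct vertices. -/
structure RoutedNetwork where
  V : Type
  ι : Type
  fintypeV : Fintype V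
  fintypeι : Fintype ι
  ω : V → V → ℕ
  routes : ι → List V
  nodup : ∀ i, (routes i).Nodup

/-!
Take `2P` vertices grouped into blocks `{2k, 2k+1}`, unit weights, and two routes, both
traversing every block upwards, one through the blocks in the order `0, …, P-1`, the other in
reverse order. They share exactly the `P` intra-block arcs, block `k` being reached at times `2k`
and `2(P-1-k)`, so with offsets `m₀, m₁` they collide modulo `Q` iff
`m₀ + 2k ≡ m₁ + 2(P-1-k) (mod Q)` for some `k < P`. Modulo `2` both sides have fixed parities,
so offsets `0` and `1` never collide; modulo an odd `P`, `4` is invertible, so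
`4k ≡ m₁ - m₀ - 2` always has a solution `k < P`.
-/

variable {V : Type*}

lemma slotSet_one (P : ℕ) (t : ℤ) : slotSet P 1 t = {(t : ZMod P)} := by
  ext s
  simp [slotSet]

lemma collide_comm (ω : V → V → ℕ) (P τ : ℕ) (r₁ r₂ : List V) (m₁ m₂ : ℤ) :
    Collide ω P τ r₁ r₂ m₁ m₂ ↔ Collide ω P τ r₂ r₁ m₂ m₁ := by
  constructor <;>
  · rintro ⟨i, j, hi, hj, hu, hv, hs⟩
    exact ⟨j, i, hj, hi, hu.symm, hv.symm, Set.inter_comm _ _ ▸ hs⟩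

lemma collide_one_iff (ω : V → V → ℕ) (P : ℕ) (r₁ r₂ : List V) (m₁ m₂ : ℤ) :
    Collide ω P 1 r₁ r₂ m₁ m₂ ↔
      ∃ i j : ℕ, i + 1 < r₁.length ∧ j + 1 < r₂.length ∧
        r₁[i]? = r₂[j]? ∧ r₁[i + 1]? = r₂[j + 1]? ∧
        ((m₁ + latency ω r₁ i : ℤ) : ZMod P) = ((m₂ + latency ω r₂ j : ℤ) : ZMod P) := by
  simp only [Collide, slotSet_one, Set.singleton_inter_nonempty, Set.mem_singleton_iff]

lemma isPeriodicAssignment_fin_two_iff (ω : V → V → ℕ) (routes : Fin 2 → List V)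
    (P τ : ℕ) (m : Fin 2 → ℤ) :
    IsPeriodicAssignment ω routes P τ m ↔ ¬ Collide ω P τ (routes 0) (routes 1) (m 0) (m 1) := by
  refine ⟨fun h => h 0 1 (by decide), fun h a b hab => ?_⟩
  fin_cases a <;> fin_cases b
  · exact absurd rfl hab
  · exact h
  · exact fun h' => h ((collide_comm ..).mp h')
  · exact absurd rfl hab

lemma latency_const (c : ℕ) (r : List V) {i : ℕ} (hi : i < r.length) :
    latency (fun _ _ => c) r i = c * i := by
  have : (arcs r).length = r.length - 1 := by simp [arcs]
  simp only [latency, List.map_const', List.take_replicate, List.sum_replicate, smul_eq_mul, this]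
  rw [mul_comm, min_eq_left (by omega)]

lemma exists_lt_natCast_mul_eq {P a : ℕ} [NeZero P] (h : a.Coprime P) (c : ZMod P) :
    ∃ k < P, (a : ZMod P) * k = c :=
  ⟨((a : ZMod P)⁻¹ * c).val, ZMod.val_lt _, by
    rw [ZMod.natCast_zmod_val, ← mul_assoc, ZMod.coe_mul_inv_eq_one a h, one_mul]⟩

lemma getElem?_finRange {n i : ℕ} (h : i < n) : (List.finRange n)[i]? = some ⟨i, h⟩ := by
  simp [h]

section BlockReversal

variable (P : ℕ)

def blockReversal (x : Fin (2 * P)) : Fin (2 * P) :=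
  ⟨2 * (P - 1 - x / 2) + x % 2, by omega⟩

lemma blockReversal_involutive : Function.Involutive (blockReversal P) := fun x => by
  ext
  simp only [blockReversal]
  omega

def blockRoutes : Fin 2 → List (Fin (2 * P)) :=
  ![List.finRange (2 * P), (List.finRange (2 * P)).map (blockReversal P)]

def blockNetwork : RoutedNetwork where
  V := Fin (2 * P)
  ι := Fin 2
  fintypeV := inferInstance
  fintypeι := inferInstance
  ω _ _ := 1
  routes := blockRoutes P
  nodup b := by
    fin_cases b
    · exact List.nodup_finRange _
    · exact (List.nodup_finRange _).map (blockReversal_involutive P).injective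

variable {P}

lemma length_blockRoutes (b : Fin 2) : (blockRoutes P b).length = 2 * P := by
  fin_cases b <;> simp [blockRoutes]

lemma latency_blockRoutes (b : Fin 2) {i : ℕ} (hi : i < 2 * P) :
    latency (fun _ _ => 1) (blockRoutes P b) i = i := by
  rw [latency_const 1 _ (by rwa [length_blockRoutes]), one_mul]

lemma blockRoutes_sharedArc_iff {i j : ℕ} (hi : i + 1 < 2 * P) (hj : j + 1 < 2 * P) :
    (blockRoutes P 0)[i]? = (blockRoutes P 1)[j]? ∧
        (blockRoutes P 0)[i + 1]? = (blockRoutes P 1)[j + 1]? ↔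
      i % 2 = 0 ∧ i + j = 2 * (P - 1) := by
  simp only [blockRoutes, Matrix.cons_val_zero, Matrix.cons_val_one, List.getElem?_map,
    getElem?_finRange (Nat.lt_of_succ_lt hi), getElem?_finRange hi,
    getElem?_finRange (Nat.lt_of_succ_lt hj), getElem?_finRange hj, Option.map_some,
    Option.some_inj, Fin.ext_iff, blockReversal]
  omega

lemma blockRoutes_collide_iff (Q : ℕ) (m₀ m₁ : ℤ) :
    Collide (fun _ _ => 1) Q 1 (blockRoutes P 0) (blockRoutes P 1) m₀ m₁ ↔
      ∃ i j : ℕ, i % 2 = 0 ∧ i + j = 2 * (P - 1) ∧ i < 2 * P ∧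
        ((m₀ + i : ℤ) : ZMod Q) = ((m₁ + j : ℤ) : ZMod Q) := by
  simp only [collide_one_iff, length_blockRoutes]
  constructor
  · rintro ⟨i, j, hi, hj, hu, hv, hs⟩
    obtain ⟨hi2, hij⟩ := (blockRoutes_sharedArc_iff hi hj).mp ⟨hu, hv⟩
    refine ⟨i, j, hi2, hij, by omega, ?_⟩
    rwa [latency_blockRoutes 0 (by omega), latency_blockRoutes 1 (by omega)] at hs
  · rintro ⟨i, j, hi2, hij, hi, hs⟩
    have hi : i + 1 < 2 * P := by omega
    have hj : j + 1 < 2 * P := by omega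
    obtain ⟨hu, hv⟩ := (blockRoutes_sharedArc_iff hi hj).mpr ⟨hi2, hij⟩
    refine ⟨i, j, hi, hj, hu, hv, ?_⟩
    rwa [latency_blockRoutes 0 (by omega), latency_blockRoutes 1 (by omega)]

end BlockReversal

lemma blockRoutes_isPeriodicAssignment_two (P : ℕ) :
    IsPeriodicAssignment (fun _ _ => 1) (blockRoutes P) 2 1 ![0, 1] := by
  rw [isPeriodicAssignment_fin_two_iff]
  intro h
  obtain ⟨i, j, hi, hij, -, hs⟩ := (blockRoutes_collide_iff 2 0 1).mp h
  rw [ZMod.intCast_eq_intCast_iff'] at hs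
  omega

lemma blockRoutes_not_isPeriodicAssignment {P : ℕ} (hodd : Odd P) (m : Fin 2 → ℤ) :
    ¬ IsPeriodicAssignment (fun _ _ => 1) (blockRoutes P) P 1 m := by
  have : NeZero P := ⟨hodd.pos.ne'⟩
  obtain ⟨k, hk, hkc⟩ := exists_lt_natCast_mul_eq (a := 4)
    (Nat.Coprime.pow_left 2 (Nat.coprime_two_left.mpr hodd)) ((m 1 - m 0 - 2 : ℤ) : ZMod P)
  rw [isPeriodicAssignment_fin_two_iff, not_not]
  refine (blockRoutes_collide_iff P (m 0) (m 1)).mpr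
    ⟨2 * k, 2 * (P - 1 - k), by omega, by omega, by omega, ?_⟩
  have hj : ((P - 1 - k : ℕ) : ZMod P) = -1 - k := by
    rw [Nat.cast_sub (by omega), Nat.cast_sub (by omega), ZMod.natCast_self]
    ring
  push_cast [hj] at hkc ⊢
  linear_combination hkc

theorem non_monotone_in_period_general (P : ℕ) (hodd : Odd P) :
    ∃ N : RoutedNetwork,
      (∃ m : N.ι → ℤ, IsPeriodicAssignment N.ω N.routes 2 1 m) ∧
      ¬ (∃ m : N.ι → ℤ, IsPeriodicAssignment N.ω N.routes P 1 m) :=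
  ⟨blockNetwork P, ⟨_, blockRoutes_isPeriodicAssignment_two P⟩,
    fun ⟨m, hm⟩ => blockRoutes_not_isPeriodicAssignment hodd m hm⟩

/-- For every odd `P ≥ 3` there is a routed network admitting a `(2,1)`-periodic
assignment but no `(P,1)`-periodic assignment: existence of a `(P,τ)`-periodic
assignment is not monotone in the period. -/
theorem non_monotone_in_period (P : ℕ) (hodd : Odd P) (hP : 3 ≤ P) :
    ∃ N : RoutedNetwork,
      (∃ m : N.ι → ℤ, IsPeriodicAssignment N.ω N.routes 2 1 m) ∧
      ¬ (∃ m : N.ι → ℤ, IsPeriodicAssignment N.ω N.routes P 1 m) :=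
  non_monotone_in_period_general P hodd
end

section
/- In the unnormalized star model, the instance with weights (ωs, c, ωt, ωt') and deadlines d admits a valid assignment if and only if the instance with weights (0, 0, ωt, ωt') and deadlines d' given by d' i = d i − 2·c − 2·ωs i admits one; indeed (m, w) ↦ (i ↦ m i + ωs i, w) is a bijection between the valid assignments of the two instances. -/
/-- Validity in the unnormalized star model with weights `(ωs, c, ωt, ωt')` and
deadlines `d`: the forward slot sets are pairwise disjoint, the backward slot
sets are pairwise disjoint, and each process time is at most the deadline. -/
def ValidStar (n P τ : ℕ) (ωs : Fin n → ℕ) (c : ℕ) (ωt ωt' : Fin n → ℕ)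
    (d : Fin n → ℤ) (m : Fin n → ℤ) (w : Fin n → ℕ) : Prop :=
  (∀ i j : Fin n, i ≠ j →
      Disjoint (slotSet P τ (m i + (ωs i : ℤ)))
               (slotSet P τ (m j + (ωs j : ℤ)))) ∧
  (∀ i j : Fin n, i ≠ j →
      Disjoint (slotSet P τ (m i + (ωs i : ℤ) + (c : ℤ) + (ωt i : ℤ) + (w i : ℤ) + (ωt' i : ℤ)))
               (slotSet P τ (m j + (ωs j : ℤ) + (c : ℤ) + (ωt j : ℤ) + (w j : ℤ) + (ωt' j : ℤ)))) ∧
  (∀ i : Fin n,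
      2 * (ωs i : ℤ) + 2 * (c : ℤ) + (ωt i : ℤ) + (ωt' i : ℤ) + (w i : ℤ) ≤ d i)

theorem slotSet_add (P τ : ℕ) (t a : ℤ) :
    slotSet P τ (t + a) = (· + (a : ZMod P)) '' slotSet P τ t := by
  ext s
  constructor
  · rintro ⟨k, hk, rfl⟩
    exact ⟨((t + k : ℤ) : ZMod P), ⟨k, hk, rfl⟩, by push_cast; ring⟩
  · rintro ⟨x, ⟨k, hk, rfl⟩, rfl⟩
    exact ⟨k, hk, by push_cast; ring⟩

theorem disjoint_slotSet_add_iff (P τ : ℕ) (t s a : ℤ) :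
    Disjoint (slotSet P τ (t + a)) (slotSet P τ (s + a)) ↔
      Disjoint (slotSet P τ t) (slotSet P τ s) := by
  rw [slotSet_add, slotSet_add, Set.disjoint_image_iff (add_left_injective _)]

theorem validStar_iff_normalized (n P τ : ℕ) (ωs : Fin n → ℕ) (c : ℕ) (ωt ωt' : Fin n → ℕ)
    (d : Fin n → ℤ) (m : Fin n → ℤ) (w : Fin n → ℕ) :
    ValidStar n P τ ωs c ωt ωt' d m w ↔
      ValidStar n P τ (fun _ => 0) 0 ωt ωt' (fun i => d i - 2 * (c : ℤ) - 2 * (ωs i : ℤ))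
        (fun i => m i + (ωs i : ℤ)) w := by
  -- Every original backward slot set is the normalized one translated by the common `c`.
  have backward_shift : ∀ i, m i + ωs i + c + ωt i + w i + ωt' i =
      (m i + ωs i + ((0 : ℕ) : ℤ) + ((0 : ℕ) : ℤ) + ωt i + w i + ωt' i) + c := fun i => by
    push_cast; ring
  unfold ValidStar
  simp only [backward_shift, disjoint_slotSet_add_iff]
  refine and_congr (by simp) (and_congr Iff.rfl (forall_congr' fun i => ?_))
  push_cast
  constructor <;> intro <;> linarith

theorem star_source_central_normalization_general (n P τ : ℕ) (ωs : Fin n → ℕ) (c : ℕ)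
    (ωt ωt' : Fin n → ℕ) (d : Fin n → ℤ) :
    (∀ (m : Fin n → ℤ) (w : Fin n → ℕ),
        ValidStar n P τ ωs c ωt ωt' d m w ↔
        ValidStar n P τ (fun _ => 0) 0 ωt ωt'
          (fun i => d i - 2 * (c : ℤ) - 2 * (ωs i : ℤ))
          (fun i => m i + (ωs i : ℤ)) w) ∧
    ((∃ (m : Fin n → ℤ) (w : Fin n → ℕ), ValidStar n P τ ωs c ωt ωt' d m w) ↔
     (∃ (m : Fin n → ℤ) (w : Fin n → ℕ),
        ValidStar n P τ (fun _ => 0) 0 ωt ωt'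
          (fun i => d i - 2 * (c : ℤ) - 2 * (ωs i : ℤ)) m w)) := by
  refine ⟨validStar_iff_normalized n P τ ωs c ωt ωt' d, ⟨?_, ?_⟩⟩
  · rintro ⟨m, w, h⟩
    exact ⟨_, w, (validStar_iff_normalized n P τ ωs c ωt ωt' d m w).1 h⟩
  · rintro ⟨m, w, h⟩
    refine ⟨fun i => m i - ωs i, w, (validStar_iff_normalized n P τ ωs c ωt ωt' d _ w).2 ?_⟩
    simpa only [sub_add_cancel] using h

/-- Normalization of source and central weights: the instance with weights
`(ωs, c, ωt, ωt')` and deadlines `d` is equivalent to the instance with weights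
`(0, 0, ωt, ωt')` and deadlines `d' i = d i - 2c - 2 ωs i`, via the bijection
`(m, w) ↦ (fun i => m i + ωs i, w)` on valid assignments. -/
theorem star_source_central_normalization (n P τ : ℕ) (hn : 1 ≤ n) (hP : 1 ≤ P)
    (hτ : 1 ≤ τ) (ωs : Fin n → ℕ) (c : ℕ) (ωt ωt' : Fin n → ℕ) (d : Fin n → ℤ) :
    (∀ (m : Fin n → ℤ) (w : Fin n → ℕ),
        ValidStar n P τ ωs c ωt ωt' d m w ↔
        ValidStar n P τ (fun _ => 0) 0 ωt ωt'
          (fun i => d i - 2 * (c : ℤ) - 2 * (ωs i : ℤ))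
          (fun i => m i + (ωs i : ℤ)) w) ∧
    ((∃ (m : Fin n → ℤ) (w : Fin n → ℕ), ValidStar n P τ ωs c ωt ωt' d m w) ↔
     (∃ (m : Fin n → ℤ) (w : Fin n → ℕ),
        ValidStar n P τ (fun _ => 0) 0 ωt ωt'
          (fun i => d i - 2 * (c : ℤ) - 2 * (ωs i : ℤ)) m w)) :=
  star_source_central_normalization_general n P τ ωs c ωt ωt' d
end

section
/- In the unnormalized star model, let a, b : Fin n → ℕ satisfy a i ≤ ωt i, b i ≤ ωt' i, and a i + b i ≡ 0 (mod P) for all i. Then a pair (m, w) is a valid assignment of the instance with weights (ωs, c, ωt, ωt') and deadlines d if and only if it is a valid assignment of the instance with weights (ωs, c, ωt − a, ωt' − b) and deadlines d' given by d' i = d i − (a i + b i). In particular one may always reduce to an instance in which ωt i + ωt' i < P for every i. -/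
lemma slotSet_congr (P τ : ℕ) {t t' : ℤ} (h : (t : ZMod P) = t') :
    slotSet P τ t = slotSet P τ t' := by
  ext s
  simp only [slotSet, Set.mem_ofPred_eq]
  constructor <;> rintro ⟨k, hk, rfl⟩ <;> exact ⟨k, hk, by push_cast [h]; rfl⟩

lemma intCast_add_sub_add_sub {P x y a b : ℕ} (ha : a ≤ x) (hb : b ≤ y) (hab : P ∣ a + b)
    (u v : ℤ) :
    ((u + (x - a : ℕ) + v + (y - b : ℕ) : ℤ) : ZMod P) = ((u + x + v + y : ℤ) : ZMod P) := by
  have hzero : ((a + b : ℕ) : ZMod P) = 0 := (ZMod.natCast_eq_zero_iff _ _).mpr hab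
  push_cast [Nat.cast_sub ha, Nat.cast_sub hb] at hzero ⊢
  linear_combination -hzero

theorem validStar_sub_targets_iff {n P τ : ℕ} {ωs : Fin n → ℕ} {c : ℕ} {ωt ωt' : Fin n → ℕ}
    {d : Fin n → ℤ} {a b : Fin n → ℕ} (ha : ∀ i, a i ≤ ωt i) (hb : ∀ i, b i ≤ ωt' i)
    (hab : ∀ i, P ∣ a i + b i) (m : Fin n → ℤ) (w : Fin n → ℕ) :
    ValidStar n P τ ωs c ωt ωt' d m w ↔
      ValidStar n P τ ωs c (fun i => ωt i - a i) (fun i => ωt' i - b i)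
        (fun i => d i - (a i + b i)) m w := by
  have backward_eq (i : Fin n) :
      slotSet P τ (m i + ωs i + c + (ωt i - a i : ℕ) + w i + (ωt' i - b i : ℕ)) =
        slotSet P τ (m i + ωs i + c + ωt i + w i + ωt' i) :=
    slotSet_congr P τ (intCast_add_sub_add_sub (ha i) (hb i) (hab i) _ _)
  have deadline_iff (i : Fin n) :
      2 * (ωs i : ℤ) + 2 * c + ωt i + ωt' i + w i ≤ d i ↔
        2 * (ωs i : ℤ) + 2 * c + (ωt i - a i : ℕ) + (ωt' i - b i : ℕ) + w i ≤ d i - (a i + b i) := by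
    rw [Nat.cast_sub (ha i), Nat.cast_sub (hb i)]
    constructor <;> intro h <;> linarith
  simp only [ValidStar, backward_eq, deadline_iff]

theorem Nat.exists_le_le_dvd_add_sub_add_sub_lt {P : ℕ} (hP : 0 < P) (x y : ℕ) :
    ∃ a ≤ x, ∃ b ≤ y, P ∣ a + b ∧ (x - a) + (y - b) < P := by
  -- remove the largest multiple of `P` below `x + y`, taking as much of it as possible from `x`
  have hr : P ∣ (x + y) - (x + y) % P := Nat.dvd_sub_mod _
  have hmod : (x + y) % P < P := Nat.mod_lt _ hP
  have hle : (x + y) % P ≤ x + y := Nat.mod_le _ _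
  refine ⟨min x ((x + y) - (x + y) % P), min_le_left _ _,
    ((x + y) - (x + y) % P) - min x ((x + y) - (x + y) % P), by omega, ?_, by omega⟩
  rwa [Nat.add_sub_cancel' (min_le_right _ _)]

theorem star_target_normalization_general (n P τ : ℕ) (hP : 1 ≤ P)
    (ωs : Fin n → ℕ) (c : ℕ) (ωt ωt' : Fin n → ℕ) (d : Fin n → ℤ)
    (a b : Fin n → ℕ) (ha : ∀ i, a i ≤ ωt i) (hb : ∀ i, b i ≤ ωt' i)
    (hab : ∀ i, (P : ℕ) ∣ (a i + b i)) :
    (∀ (m : Fin n → ℤ) (w : Fin n → ℕ),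
        ValidStar n P τ ωs c ωt ωt' d m w ↔
        ValidStar n P τ ωs c (fun i => ωt i - a i) (fun i => ωt' i - b i)
          (fun i => d i - ((a i : ℤ) + (b i : ℤ))) m w) ∧
    (∃ a' b' : Fin n → ℕ, ∀ i : Fin n,
        a' i ≤ ωt i ∧ b' i ≤ ωt' i ∧ (P : ℕ) ∣ (a' i + b' i) ∧
        (ωt i - a' i) + (ωt' i - b' i) < P) := by
  refine ⟨validStar_sub_targets_iff ha hb hab, ?_⟩
  choose a' ha' b' hb' hdvd hlt using fun i => Nat.exists_le_le_dvd_add_sub_add_sub_lt hP (ωt i) (ωt' i)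
  exact ⟨a', b', fun i => ⟨ha' i, hb' i, hdvd i, hlt i⟩⟩

/-- Normalization of target weights: subtracting `a i` from `ωt i` and `b i`
from `ωt' i`, where `a i + b i ≡ 0 (mod P)`, and `a i + b i` from the deadline,
preserves the valid assignments. In particular one can always reduce to an
instance where `ωt i + ωt' i < P` for every `i`. -/
theorem star_target_normalization (n P τ : ℕ) (hn : 1 ≤ n) (hP : 1 ≤ P)
    (hτ : 1 ≤ τ) (ωs : Fin n → ℕ) (c : ℕ) (ωt ωt' : Fin n → ℕ) (d : Fin n → ℤ)
    (a b : Fin n → ℕ) (ha : ∀ i, a i ≤ ωt i) (hb : ∀ i, b i ≤ ωt' i)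
    (hab : ∀ i, (P : ℕ) ∣ (a i + b i)) :
    (∀ (m : Fin n → ℤ) (w : Fin n → ℕ),
        ValidStar n P τ ωs c ωt ωt' d m w ↔
        ValidStar n P τ ωs c (fun i => ωt i - a i) (fun i => ωt' i - b i)
          (fun i => d i - ((a i : ℤ) + (b i : ℤ))) m w) ∧
    (∃ a' b' : Fin n → ℕ, ∀ i : Fin n,
        a' i ≤ ωt i ∧ b' i ≤ ωt' i ∧ (P : ℕ) ∣ (a' i + b' i) ∧
        (ωt i - a' i) + (ωt' i - b' i) < P) :=
  star_target_normalization_general n P τ hP ωs c ωt ωt' d a b ha hb hab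
end

section
/- Shortest-Longest correctness: in the star model with zero waiting, assume the latencies are nondecreasing (i ≤ j implies λ i ≤ λ j) and n·τ + 2·(λ (n−1) − λ 0) ≤ P. Then the assignment m i = i·τ is valid: the forward slot sets F_i are pairwise disjoint and the backward slot sets B_i are pairwise disjoint. -/
/-- Forward slot set of route `i` in the star model with zero waiting. -/
def fwdSlots (n P τ : ℕ) (m : Fin n → ℤ) (i : Fin n) : Set (ZMod P) :=
  slotSet P τ (m i)

/-- Backward slot set of route `i` in the star model with zero waiting. -/
def bwdSlots (n P τ : ℕ) (lam : Fin n → ℕ) (m : Fin n → ℤ) (i : Fin n) : Set (ZMod P) :=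
  slotSet P τ (m i + 2 * (lam i : ℤ))

/-- Validity in the star model with zero waiting: the forward slot sets are
pairwise disjoint and the backward slot sets are pairwise disjoint. -/
def ValidZW (n P τ : ℕ) (lam : Fin n → ℕ) (m : Fin n → ℤ) : Prop :=
  ∀ i j : Fin n, i ≠ j →
    Disjoint (fwdSlots n P τ m i) (fwdSlots n P τ m j) ∧
    Disjoint (bwdSlots n P τ lam m i) (bwdSlots n P τ lam m j)

/-! With `m i = i·τ` the forward windows tile `[0, nτ)` in order. Shifting window `i` by `2λᵢ`
keeps that order, since `λ` is nondecreasing, and the backward windows then fill an interval of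
length at most `nτ + 2(λₙ₋₁ - λ₀) ≤ P`. Windows lying in order inside an interval of length `P`
do not meet modulo `P`. -/

lemma slotSet_disjoint (P τ : ℕ) (s t : ℤ) (h1 : s + τ ≤ t) (h2 : t + τ ≤ s + P) :
    Disjoint (slotSet P τ s) (slotSet P τ t) := by
  rw [Set.disjoint_left]
  rintro x ⟨k, hk, rfl⟩ ⟨k', hk', he⟩
  have hdvd : (P : ℤ) ∣ (t + k') - (s + k) :=
    ((ZMod.intCast_eq_intCast_iff _ _ _).mp he).dvd
  have hzero : (t + k') - (s + k) = 0 :=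
    Int.eq_zero_of_abs_lt_dvd hdvd (by rw [abs_of_pos] <;> omega)
  omega

lemma validZW_of_forall_lt (n P τ : ℕ) (lam : Fin n → ℕ) (m : Fin n → ℤ)
    (h : ∀ i j : Fin n, i < j →
      Disjoint (fwdSlots n P τ m i) (fwdSlots n P τ m j) ∧
      Disjoint (bwdSlots n P τ lam m i) (bwdSlots n P τ lam m j)) :
    ValidZW n P τ lam m := by
  intro i j hij
  rcases hij.lt_or_gt with hlt | hgt
  · exact h i j hlt
  · exact ⟨(h j i hgt).1.symm, (h j i hgt).2.symm⟩

lemma add_le_mul_of_lt (τ : ℕ) {a b : ℕ} (h : a < b) : (a * τ + τ : ℤ) ≤ b * τ := by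
  have := Nat.mul_le_mul_right τ h
  rw [Nat.succ_mul] at this
  exact_mod_cast this

/-- Shortest-Longest correctness: if the latencies are nondecreasing and
`n·τ + 2·(λ(n-1) - λ(0)) ≤ P`, then the assignment `m i = i·τ` is valid. -/
theorem shortest_longest_correct (n P τ : ℕ) (hn : 1 ≤ n)
    (lam : Fin n → ℕ)
    (hmono : ∀ i j : Fin n, i ≤ j → lam i ≤ lam j)
    (hbound : n * τ + 2 * (lam ⟨n - 1, by omega⟩ - lam ⟨0, by omega⟩) ≤ P) :
    ValidZW n P τ lam (fun i => ((i : ℕ) * τ : ℤ)) := by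
  have hfirst (i : Fin n) : lam ⟨0, by omega⟩ ≤ lam i :=
    hmono _ _ (Fin.le_def.mpr (Nat.zero_le _))
  have hlast (i : Fin n) : lam i ≤ lam ⟨n - 1, by omega⟩ :=
    hmono _ _ (Fin.le_def.mpr (Nat.le_sub_one_of_lt i.isLt))
  have hspread : (n * τ + 2 * (lam ⟨n - 1, by omega⟩ - lam ⟨0, by omega⟩ : ℤ)) ≤ P := by
    zify [hfirst ⟨n - 1, by omega⟩] at hbound
    exact hbound
  refine validZW_of_forall_lt _ _ _ _ _ fun i j hij => ?_
  have hgap := add_le_mul_of_lt τ hij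
  have hend := add_le_mul_of_lt τ j.isLt
  have hstart : (0 : ℤ) ≤ (i : ℕ) * τ := by positivity
  have hlam : (lam i : ℤ) ≤ lam j := by exact_mod_cast hmono i j hij.le
  have hi : (lam ⟨0, by omega⟩ : ℤ) ≤ lam i := by exact_mod_cast hfirst i
  have hj : (lam j : ℤ) ≤ lam ⟨n - 1, by omega⟩ := by exact_mod_cast hlast j
  exact ⟨slotSet_disjoint P τ _ _ hgap (by linarith),
    slotSet_disjoint P τ _ _ (by linarith) (by linarith)⟩
end

section
/- Greedy feasibility at load one third: in the star model with zero waiting, if 3·n·τ ≤ P then for every choice of latencies λ : Fin n → ℕ there exists a valid assignment m : Fin n → ℤ (the forward slot sets are pairwise disjoint and the backward slot sets are pairwise disjoint). -/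
/-!
Route `i` gets the forward offset `τ * xᵢ` with `xᵢ < K := P / τ`, so that `3 * n ≤ K`; distinct
lattice points give disjoint forward windows because `τ * K ≤ P`. Two windows of length `τ` can
only meet when their starts differ by less than `τ` modulo `P`. The backward starts
`τ * x + 2 * λᵢ` (`x < K`) are `τ` apart along an arc shorter than `P`, so at most two of them come
that close to a given backward start. Each placed route therefore excludes at most three lattice
points for a new one, and a greedy choice succeeds because `3 * (n - 1) < K`.
-/

open Finset

def IsNearMultiple (P τ : ℕ) (t : ℤ) : Prop :=
  ∃ e : ℤ, |e| < τ ∧ t ≡ e [ZMOD P]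

namespace IsNearMultiple

variable {P τ : ℕ} {t : ℤ}

lemma neg (h : IsNearMultiple P τ t) : IsNearMultiple P τ (-t) := by
  obtain ⟨e, he, hte⟩ := h
  exact ⟨-e, by rwa [abs_neg], hte.neg⟩

lemma of_modEq {t' : ℤ} (h : IsNearMultiple P τ t) (htt' : t ≡ t' [ZMOD P]) :
    IsNearMultiple P τ t' := by
  obtain ⟨e, he, hte⟩ := h
  exact ⟨e, he, htt'.symm.trans hte⟩

lemma lt_or_mem_Ioo (h : IsNearMultiple P τ t) (hτP : τ ≤ P) (ht₀ : 0 ≤ t)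
    (ht : t < 2 * P - τ) : t < τ ∨ P - τ < t ∧ t < P + τ := by
  obtain ⟨e, he, hte⟩ := h
  obtain ⟨k, hk⟩ := hte.dvd
  rw [abs_lt] at he
  have hP : (0 : ℤ) < P := by omega
  have hk₁ : k < 1 := lt_of_mul_lt_mul_left (a := (P : ℤ)) (by omega) hP.le
  have hk₂ : -2 < k := lt_of_mul_lt_mul_left (a := (P : ℤ)) (by omega) hP.le
  obtain rfl | rfl : k = -1 ∨ k = 0 := by omega
  all_goals omega

end IsNearMultiple

lemma disjoint_slotSet_of_not_isNearMultiple {P τ : ℕ} {a b : ℤ}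
    (h : ¬ IsNearMultiple P τ (a - b)) : Disjoint (slotSet P τ a) (slotSet P τ b) := by
  rw [Set.disjoint_left]
  rintro s ⟨k, hk, rfl⟩ ⟨l, hl, hs⟩
  refine h ⟨l - k, abs_sub_lt_iff.2 ⟨by omega, by omega⟩, ?_⟩
  have := ((ZMod.intCast_eq_intCast_iff _ _ _).1 hs).sub_right (b + k)
  convert this using 1 <;> ring

lemma mul_add_le_or_of_ne {τ x y : ℕ} (hxy : x ≠ y) :
    (τ : ℤ) * x + τ ≤ τ * y ∨ (τ : ℤ) * y + τ ≤ τ * x := by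
  rcases hxy.lt_or_gt with h | h
  · left; exact_mod_cast Nat.mul_succ τ x ▸ Nat.mul_le_mul_left τ h
  · right; exact_mod_cast Nat.mul_succ τ y ▸ Nat.mul_le_mul_left τ h

lemma mul_mem_Icc_of_lt {P τ K x : ℕ} (hK : τ * K ≤ P) (hx : x < K) :
    (τ : ℤ) * x ∈ Set.Icc 0 ((P : ℤ) - τ) := by
  have := Nat.mul_le_mul_left τ hx
  rw [Nat.mul_succ] at this
  constructor <;> [positivity; omega]

lemma eq_of_isNearMultiple_mul_sub_mul {P τ K x y : ℕ} (hK : τ * K ≤ P) (hx : x < K) (hy : y < K)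
    (h : IsNearMultiple P τ (τ * x - τ * y)) : x = y := by
  by_contra hxy
  have hτ : 0 < τ := by obtain ⟨e, he, -⟩ := h; have := abs_nonneg e; omega
  have hτP : τ ≤ P := (Nat.le_mul_of_pos_right τ (by omega)).trans hK
  obtain ⟨hx₀, hxP⟩ := mul_mem_Icc_of_lt hK hx
  obtain ⟨hy₀, hyP⟩ := mul_mem_Icc_of_lt hK hy
  rcases mul_add_le_or_of_ne (τ := τ) hxy with hlt | hlt
  · have := h.neg.lt_or_mem_Ioo (by omega) (by omega) (by omega)
    omega
  · have := h.lt_or_mem_Ioo (by omega) (by omega) (by omega)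
    omega

open Classical in
lemma card_filter_isNearMultiple_le_two {P τ K : ℕ} (hK : τ * K ≤ P) (c : ℤ) :
    #{x ∈ range K | IsNearMultiple P τ (τ * (x : ℕ) + c)} ≤ 2 := by
  by_contra! h
  obtain ⟨x, y, z, hx, hy, hz, hxy, hxz, hyz⟩ := two_lt_card_iff.1 h
  simp only [mem_filter, mem_range] at hx hy hz
  have hK0 : 0 < K := by omega
  have hτ : 0 < τ := by obtain ⟨e, he, -⟩ := hx.2; have := abs_nonneg e; omega
  have hτP : τ ≤ P := (Nat.le_mul_of_pos_right τ hK0).trans hK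
  have hP : (0 : ℤ) < P := by omega
  have hr₀ : 0 ≤ c % P := Int.emod_nonneg _ hP.ne'
  have hrP : c % P < P := Int.emod_lt_of_pos _ hP
  have window : ∀ w < K, IsNearMultiple P τ (τ * w + c) →
      τ * w + c % P < τ ∨ P - τ < τ * w + c % P ∧ τ * w + c % P < P + τ := by
    intro w hw hnear
    obtain ⟨-, hwP⟩ := mul_mem_Icc_of_lt hK hw
    exact (hnear.of_modEq ((Int.mod_modEq c P).symm.add_left _)).lt_or_mem_Ioo
      (by omega) (by positivity) (by omega)
  have := window x hx.1 hx.2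
  have := window y hy.1 hy.2
  have := window z hz.1 hz.2
  obtain ⟨hx₀, hxP⟩ := mul_mem_Icc_of_lt hK hx.1
  obtain ⟨hy₀, hyP⟩ := mul_mem_Icc_of_lt hK hy.1
  obtain ⟨hz₀, hzP⟩ := mul_mem_Icc_of_lt hK hz.1
  have := mul_add_le_or_of_ne (τ := τ) hxy
  have := mul_add_le_or_of_ne (τ := τ) hxz
  have := mul_add_le_or_of_ne (τ := τ) hyz
  omega

open Classical in
theorem exists_conflictFree_of_card_filter_le {ι α : Type*} [Fintype ι] (C : ι → α → ι → α → Prop)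
    (V : Finset α) {d : ℕ} (hC : ∀ i x j y, C i x j y → C j y i x)
    (hd : ∀ i j y, i ≠ j → #{x ∈ V | C i x j y} ≤ d) (hd₀ : 0 < d)
    (hV : d * Fintype.card ι ≤ #V) :
    ∃ f : ι → α, (∀ i, f i ∈ V) ∧ ∀ i j, i ≠ j → ¬ C i (f i) j (f j) := by
  have : Nonempty (ι → α) := by
    rcases isEmpty_or_nonempty ι with hι | hι
    · infer_instance
    · obtain ⟨v, -⟩ := card_pos.1 (hV.trans_lt' (by positivity))
      exact ⟨fun _ => v⟩
  suffices ∀ s : Finset ι, ∃ f : ι → α, (∀ i ∈ s, f i ∈ V) ∧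
      ∀ i ∈ s, ∀ j ∈ s, i ≠ j → ¬ C i (f i) j (f j) by
    simpa using this univ
  intro s
  induction s using Finset.induction_on with
  | empty => simp
  | insert a s ha ih =>
    obtain ⟨f, hfV, hf⟩ := ih
    have hbad : #(s.biUnion fun j => {x ∈ V | C a x j (f j)}) < #V :=
      calc _ ≤ #s * d := card_biUnion_le_card_mul _ _ _ fun j hj =>
            hd a j _ (ne_of_mem_of_not_mem hj ha).symm
        _ < Fintype.card ι * d := Nat.mul_lt_mul_of_pos_right (card_lt_univ_of_notMem ha) hd₀
        _ ≤ #V := by rwa [mul_comm]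
    obtain ⟨v, hvV, hv⟩ := exists_mem_notMem_of_card_lt_card hbad
    have fresh : ∀ j ∈ s, ¬ C a v j (f j) := fun j hj hC' =>
      hv (mem_biUnion.2 ⟨j, hj, mem_filter.2 ⟨hvV, hC'⟩⟩)
    have upd : ∀ j ∈ s, Function.update f a v j = f j := fun j hj =>
      Function.update_of_ne (ne_of_mem_of_not_mem hj ha) _ _
    refine ⟨Function.update f a v, ?_, ?_⟩
    · intro i hi
      rcases mem_insert.1 hi with rfl | hi
      · rwa [Function.update_self]
      · rw [upd i hi]; exact hfV i hi
    · intro i hi j hj hij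
      rcases mem_insert.1 hi with rfl | his <;> rcases mem_insert.1 hj with rfl | hjs
      · exact (hij rfl).elim
      · rw [Function.update_self, upd j hjs]; exact fresh j hjs
      · rw [Function.update_self, upd i his]; exact fun h => fresh i his (hC _ _ _ _ h)
      · rw [upd i his, upd j hjs]; exact hf i his j hjs hij

/-- `x`, `y` are lattice positions: routes `i`, `j` get the forward offsets `τ * x`, `τ * y`. -/
def RouteConflict {ι : Type*} (P τ : ℕ) (lam : ι → ℕ) (i : ι) (x : ℕ) (j : ι) (y : ℕ) : Prop :=
  x = y ∨ IsNearMultiple P τ (τ * x + 2 * lam i - (τ * y + 2 * lam j))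

lemma RouteConflict.symm {ι : Type*} {P τ : ℕ} {lam : ι → ℕ} {i j : ι} {x y : ℕ}
    (h : RouteConflict P τ lam i x j y) : RouteConflict P τ lam j y i x :=
  h.imp Eq.symm fun hnear => by simpa using hnear.neg

open Classical in
lemma card_filter_routeConflict_le_three {ι : Type*} {P τ K : ℕ} (hK : τ * K ≤ P) (lam : ι → ℕ)
    (i j : ι) (y : ℕ) : #{x ∈ range K | RouteConflict P τ lam i x j y} ≤ 3 := by
  simp only [RouteConflict, filter_or, add_sub_assoc]
  calc _ ≤ #{x ∈ range K | x = y} + 2 :=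
        (card_union_le _ _).trans (Nat.add_le_add_left (card_filter_isNearMultiple_le_two hK _) _)
    _ ≤ 1 + 2 := by
        gcongr
        exact card_le_one.2 fun a ha b hb => by simp only [mem_filter] at ha hb; rw [ha.2, hb.2]

theorem greedy_feasibility_load_one_third_general (n P τ : ℕ)
    (hτ : 1 ≤ τ) (hload : 3 * n * τ ≤ P) (lam : Fin n → ℕ) :
    ∃ m : Fin n → ℤ, ValidZW n P τ lam m := by
  have hK : τ * (P / τ) ≤ P := Nat.mul_div_le P τ
  have hnK : 3 * n ≤ P / τ := (Nat.le_div_iff_mul_le hτ).2 hload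
  obtain ⟨x, hxK, hx⟩ :=
    exists_conflictFree_of_card_filter_le (RouteConflict P τ lam) (range (P / τ))
    (fun _ _ _ _ => RouteConflict.symm)
    (fun i j y _ => card_filter_routeConflict_le_three hK lam i j y) three_pos (by simpa using hnK)
  refine ⟨fun i => τ * x i, fun i j hij => ?_⟩
  obtain ⟨hne, hfar⟩ := not_or.1 (hx i j hij)
  exact ⟨disjoint_slotSet_of_not_isNearMultiple
      (mt (eq_of_isNearMultiple_mul_sub_mul hK (mem_range.1 (hxK i)) (mem_range.1 (hxK j))) hne),
    disjoint_slotSet_of_not_isNearMultiple hfar⟩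

/-- Greedy feasibility at load one third: if `3·n·τ ≤ P` then for every choice
of latencies there exists a valid assignment. -/
theorem greedy_feasibility_load_one_third (n P τ : ℕ) (hn : 1 ≤ n) (hP : 1 ≤ P)
    (hτ : 1 ≤ τ) (hload : 3 * n * τ ≤ P) (lam : Fin n → ℕ) :
    ∃ m : Fin n → ℤ, ValidZW n P τ lam m :=
  greedy_feasibility_load_one_third_general n P τ hτ hload lam
end

section
/- Existence of compact assignments: in the star model with zero waiting, if there exists a valid assignment, then there exists a valid compact assignment. -/
/-- The assignment `m` with `1` subtracted from the offsets of the routes in `T`. -/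
def shiftDown {n : ℕ} (m : Fin n → ℤ) (T : Finset (Fin n)) : Fin n → ℤ :=
  fun i => if i ∈ T then m i - 1 else m i

/-- Routes `i` and `j` collide under `m`: their forward slot sets intersect or
their backward slot sets intersect. -/
def CollideZW (n P τ : ℕ) (lam : Fin n → ℕ) (m : Fin n → ℤ) (i j : Fin n) : Prop :=
  (fwdSlots n P τ m i ∩ fwdSlots n P τ m j).Nonempty ∨
  (bwdSlots n P τ lam m i ∩ bwdSlots n P τ lam m j).Nonempty

/-- A valid assignment `m` is compact if there is an index `i₀` such that for
every nonempty set `T` of indices avoiding `i₀`, subtracting `1` from the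
offsets of the routes in `T` creates a collision between some route of `T` and
some route outside `T`. -/
def CompactZW (n P τ : ℕ) (lam : Fin n → ℕ) (m : Fin n → ℤ) : Prop :=
  ∃ i₀ : Fin n, ∀ T : Finset (Fin n), T.Nonempty → i₀ ∉ T →
    ∃ i ∈ T, ∃ j : Fin n, j ∉ T ∧ CollideZW n P τ lam (shiftDown m T) i j

/-!
Fix a route `i₀` and measure an assignment `m` by `∑ i, val (m i - m i₀ mod P)`.
Among the valid assignments take one of minimal measure. If it were not compact
for `i₀`, some nonempty `T` avoiding `i₀` could be shifted down by one without a
collision between `T` and its complement; the shifted assignment is still valid,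
since the slot sets inside `T` all move together. The offsets of a valid assignment
are pairwise distinct modulo `P`, so every `i ∈ T` has a nonzero residue
`m i - m i₀`, which the shift lowers by one: the measure drops, a contradiction.
-/

theorem ZMod.val_sub_one_lt {n : ℕ} [NeZero n] {x : ZMod n} (hx : x ≠ 0) :
    (x - 1).val < x.val := by
  have hn : 1 < n := by
    by_contra! h
    obtain rfl : n = 1 := le_antisymm h (Nat.pos_of_ne_zero (NeZero.ne n))
    exact hx (Subsingleton.elim _ _)
  have : Fact (1 < n) := ⟨hn⟩
  have hx1 : (1 : ZMod n).val ≤ x.val := by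
    rw [ZMod.val_one]
    exact ZMod.val_pos.mpr hx
  rw [ZMod.val_sub hx1, ZMod.val_one]
  exact Nat.sub_one_lt ((ZMod.val_ne_zero x).mpr hx)

section Slots

variable {n P τ : ℕ}

theorem intCast_mem_slotSet (hτ : 1 ≤ τ) (t : ℤ) : (t : ZMod P) ∈ slotSet P τ t :=
  ⟨0, hτ, by simp⟩

theorem slotSet_sub_one (t : ℤ) : slotSet P τ (t - 1) = (· + 1) ⁻¹' slotSet P τ t := by
  ext s
  constructor
  · rintro ⟨k, hk, rfl⟩
    exact ⟨k, hk, by push_cast; ring⟩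
  · rintro ⟨k, hk, h⟩
    refine ⟨k, hk, ?_⟩
    rw [eq_sub_of_add_eq h]
    push_cast
    ring

theorem not_collideZW_iff {lam : Fin n → ℕ} {m : Fin n → ℤ} {i j : Fin n} :
    ¬ CollideZW n P τ lam m i j ↔
      Disjoint (fwdSlots n P τ m i) (fwdSlots n P τ m j) ∧
      Disjoint (bwdSlots n P τ lam m i) (bwdSlots n P τ lam m j) := by
  simp only [CollideZW, not_or, Set.not_nonempty_iff_eq_empty, Set.disjoint_iff_inter_eq_empty]

end Slots

section Valid

variable {n P τ : ℕ} {lam : Fin n → ℕ} {m : Fin n → ℤ}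

theorem ValidZW.intCast_ne (hτ : 1 ≤ τ) (hv : ValidZW n P τ lam m) {i j : Fin n}
    (hij : i ≠ j) : (m i : ZMod P) ≠ m j := fun h =>
  Set.disjoint_left.mp (hv i j hij).1 (intCast_mem_slotSet hτ (m i))
    (h ▸ intCast_mem_slotSet hτ (m j))

theorem ValidZW.shiftDown (hv : ValidZW n P τ lam m) {T : Finset (Fin n)}
    (hsep : ∀ i ∈ T, ∀ j, j ∉ T → ¬ CollideZW n P τ lam (shiftDown m T) i j) :
    ValidZW n P τ lam (shiftDown m T) := by
  intro i j hij
  by_cases hi : i ∈ T <;> by_cases hj : j ∈ T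
  · obtain ⟨hf, hb⟩ := hv i j hij
    simp only [fwdSlots, bwdSlots, _root_.shiftDown, hi, hj, if_true, sub_add_eq_add_sub,
      slotSet_sub_one]
    exact ⟨hf.preimage _, hb.preimage _⟩
  · exact not_collideZW_iff.mp (hsep i hi j hj)
  · obtain ⟨hf, hb⟩ := not_collideZW_iff.mp (hsep j hj i hi)
    exact ⟨hf.symm, hb.symm⟩
  · simpa only [fwdSlots, bwdSlots, _root_.shiftDown, hi, hj, if_false] using hv i j hij

end Valid

def residueSum {n : ℕ} (P : ℕ) (i₀ : Fin n) (m : Fin n → ℤ) : ℕ :=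
  ∑ i, ((m i - m i₀ : ℤ) : ZMod P).val

theorem residueSum_shiftDown_lt {n P τ : ℕ} [NeZero P] (hτ : 1 ≤ τ) {lam : Fin n → ℕ}
    {m : Fin n → ℤ} (hv : ValidZW n P τ lam m) {T : Finset (Fin n)} (hT : T.Nonempty)
    {i₀ : Fin n} (hi₀ : i₀ ∉ T) :
    residueSum P i₀ (shiftDown m T) < residueSum P i₀ m := by
  have hlt : ∀ i ∈ T, ((shiftDown m T i - shiftDown m T i₀ : ℤ) : ZMod P).val <
      ((m i - m i₀ : ℤ) : ZMod P).val := by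
    intro i hi
    have hne : ((m i - m i₀ : ℤ) : ZMod P) ≠ 0 := by
      push_cast
      exact sub_ne_zero.mpr (hv.intCast_ne hτ (ne_of_mem_of_not_mem hi hi₀))
    convert ZMod.val_sub_one_lt hne using 2
    simp only [_root_.shiftDown, hi, hi₀, if_true, if_false]
    push_cast
    ring
  refine Finset.sum_lt_sum (fun i _ => ?_) ?_
  · by_cases hi : i ∈ T
    · exact (hlt i hi).le
    · simp only [_root_.shiftDown, hi, hi₀, if_false, le_refl]
  · obtain ⟨i, hi⟩ := hT
    exact ⟨i, Finset.mem_univ i, hlt i hi⟩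

/-- Existence of compact assignments: if there is a valid assignment in the star
model with zero waiting, then there is a valid compact assignment. -/
theorem exists_compact_assignment (n P τ : ℕ) (hn : 1 ≤ n) (hP : 1 ≤ P)
    (hτ : 1 ≤ τ) (lam : Fin n → ℕ)
    (h : ∃ m : Fin n → ℤ, ValidZW n P τ lam m) :
    ∃ m : Fin n → ℤ, ValidZW n P τ lam m ∧ CompactZW n P τ lam m := by
  have : NeZero P := ⟨by omega⟩
  let i₀ : Fin n := ⟨0, hn⟩
  obtain ⟨m, hm, hmin⟩ := (measure (residueSum P i₀)).wf.has_min {m | ValidZW n P τ lam m} h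
  refine ⟨m, hm, i₀, fun T hT hi₀ => ?_⟩
  by_contra! hsep
  exact hmin _ (hm.shiftDown hsep) (residueSum_shiftDown_lt hτ hm hT hi₀)
end

section
/- Reversal of assignments: let (V, ω, r_1, …, r_n) be a routed network with ω symmetric (ω(u,v) = ω(v,u) for all u, v), and let m be a (P,τ)-periodic assignment of it. Then the reversed routes r̄_1, …, r̄_n (each route listed in the opposite order), with offsets m'_i = −(m_i + λ(r_i)), form a (P,τ)-periodic assignment of the reversed routed network: no two distinct reversed routes collide. -/
/-- The length of a route: the sum of the weights of all its arcs. -/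
def routeLen {V : Type*} (ω : V → V → ℕ) (r : List V) : ℕ :=
  ((arcs r).map fun p => ω p.1 p.2).sum

/-!
Reading a route backwards turns its arc `(u, v)` at position `j` into the arc `(v, u)` at
position `n - 2 - j`, and since `ω` is symmetric the latency of a vertex in the reversed route is
`λ(r)` minus its latency in `r`. With the offset `-(m + λ(r))`, the reversed route therefore
starts its slot set at `v` at `-ω(u, v) - (m + λ(u, r))`, so it is the image of the original slot
set at `u` under `x ↦ τ - 1 - ω(u, v) - x`. This bijection of `ZMod P` depends only on the arc,
so two reversed routes collide on `(v, u)` exactly when the original ones collide on `(u, v)`.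
-/

theorem List.zip_reverse_of_length_eq {α β : Type*} :
    ∀ {a : List α} {b : List β}, a.length = b.length →
      List.zip a.reverse b.reverse = (List.zip a b).reverse
  | [], _, _ => by simp
  | _ :: _, [], h => by simp at h
  | x :: a, y :: b, h => by
    simp only [List.reverse_cons, List.zip_cons_cons]
    rw [List.zip_append (by simpa using h), List.zip_reverse_of_length_eq (by simpa using h)]
    rfl

theorem List.getElem?_reverse_of_add_eq {α : Type*} {l : List α} {i j : ℕ}
    (h : i + j + 1 = l.length) : l.reverse[i]? = l[j]? := by
  rw [List.getElem?_reverse (by omega), show l.length - 1 - i = j by omega]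

section Arcs

variable {V : Type*}

theorem arcs_eq_zip_dropLast (l : List V) : arcs l = List.zip l.dropLast l.tail := by
  rw [arcs, List.zip_eq_zip_take_min, List.dropLast_eq_take, List.length_tail,
    min_eq_right (Nat.sub_le _ _), List.take_of_length_le (l := l.tail) (by simp)]

theorem arcs_reverse (l : List V) : arcs l.reverse = ((arcs l).map Prod.swap).reverse := by
  rw [arcs_eq_zip_dropLast, arcs_eq_zip_dropLast, List.dropLast_reverse, List.tail_reverse,
    List.zip_reverse_of_length_eq (by simp), List.zip_swap]

theorem getElem?_arcs_eq_some {l : List V} {i : ℕ} {u v : V} (hu : l[i]? = some u)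
    (hv : l[i + 1]? = some v) : (arcs l)[i]? = some (u, v) := by
  rw [arcs, List.getElem?_zip_eq_some, List.getElem?_tail]
  exact ⟨hu, hv⟩

variable (ω : V → V → ℕ)

theorem latency_succ {l : List V} {i : ℕ} {u v : V} (hu : l[i]? = some u)
    (hv : l[i + 1]? = some v) : latency ω l (i + 1) = latency ω l i + ω u v := by
  simp [latency, List.take_add_one, getElem?_arcs_eq_some hu hv]

theorem latency_reverse_add_latency (hsym : ∀ u v, ω u v = ω v u) (l : List V) (i : ℕ) :
    latency ω l.reverse i + latency ω l (l.length - 1 - i) = routeLen ω l := by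
  have hweights : ((arcs l.reverse).map fun p => ω p.1 p.2) =
      ((arcs l).map fun p => ω p.1 p.2).reverse := by
    rw [arcs_reverse, List.map_reverse, List.map_map]
    congr 2
    funext p
    exact hsym _ _
  have hlen : ((arcs l).map fun p => ω p.1 p.2).length = l.length - 1 := by
    simp [arcs]
  rw [latency, hweights, List.take_reverse, List.sum_reverse, hlen, add_comm, latency,
    Nat.sub_right_comm, routeLen, List.sum_take_add_sum_drop]

theorem neg_add_latency_reverse (hsym : ∀ u v, ω u v = ω v u) (l : List V) (m : ℤ)
    {i j : ℕ} {u v : V} (hlen : i + j + 2 = l.length) (hu : l[j]? = some u)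
    (hv : l[j + 1]? = some v) :
    -(m + routeLen ω l) + latency ω l.reverse i = -(ω u v : ℤ) - (m + latency ω l j) := by
  have hrev := latency_reverse_add_latency ω hsym l i
  rw [show l.length - 1 - i = j + 1 by omega, latency_succ ω hu hv] at hrev
  rw [← hrev]
  push_cast
  ring

end Arcs

theorem slotSet_inter_nonempty_of_sub {P τ : ℕ} {c t s : ℤ}
    (h : (slotSet P τ (c - t) ∩ slotSet P τ (c - s)).Nonempty) :
    (slotSet P τ t ∩ slotSet P τ s).Nonempty := by
  obtain ⟨x, ⟨k, hk, hx⟩, ⟨k', hk', hx'⟩⟩ := h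
  refine ⟨((t + k' : ℤ) : ZMod P), ⟨k', hk', rfl⟩, ⟨k, hk, ?_⟩⟩
  have hcast := hx.symm.trans hx'
  push_cast at hcast ⊢
  linear_combination -hcast

theorem Collide.of_reverse {V : Type*} {ω : V → V → ℕ} (hsym : ∀ u v, ω u v = ω v u)
    {P τ : ℕ} {r₁ r₂ : List V} {m₁ m₂ : ℤ}
    (h : Collide ω P τ r₁.reverse r₂.reverse (-(m₁ + routeLen ω r₁)) (-(m₂ + routeLen ω r₂))) :
    Collide ω P τ r₁ r₂ m₁ m₂ := by
  obtain ⟨i, j, hi, hj, hhead, htail, hslots⟩ := h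
  rw [List.length_reverse] at hi hj
  obtain ⟨i', hi'⟩ : ∃ i', i + i' + 2 = r₁.length := ⟨r₁.length - i - 2, by omega⟩
  obtain ⟨j', hj'⟩ : ∃ j', j + j' + 2 = r₂.length := ⟨r₂.length - j - 2, by omega⟩
  rw [List.getElem?_reverse_of_add_eq (by omega : i + (i' + 1) + 1 = r₁.length),
    List.getElem?_reverse_of_add_eq (by omega : j + (j' + 1) + 1 = r₂.length)] at hhead
  rw [List.getElem?_reverse_of_add_eq (by omega : i + 1 + i' + 1 = r₁.length),
    List.getElem?_reverse_of_add_eq (by omega : j + 1 + j' + 1 = r₂.length)] at htail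
  have hu : r₁[i']? = some r₁[i'] := List.getElem?_eq_getElem (by omega)
  have hv : r₁[i' + 1]? = some r₁[i' + 1] := List.getElem?_eq_getElem (by omega)
  rw [neg_add_latency_reverse ω hsym r₁ m₁ hi' hu hv,
    neg_add_latency_reverse ω hsym r₂ m₂ hj' (htail ▸ hu) (hhead ▸ hv)] at hslots
  exact ⟨i', j', by omega, by omega, htail, hhead, slotSet_inter_nonempty_of_sub hslots⟩

theorem reversal_of_assignment_general {V ι : Type*}
    (ω : V → V → ℕ) (hsym : ∀ u v : V, ω u v = ω v u)
    (routes : ι → List V)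
    (P τ : ℕ) (m : ι → ℤ)
    (h : IsPeriodicAssignment ω routes P τ m) :
    IsPeriodicAssignment ω (fun i => (routes i).reverse) P τ
      (fun i => -(m i + (routeLen ω (routes i) : ℤ))) :=
  fun a b hab hcollide => h a b hab (Collide.of_reverse hsym hcollide)

/-- Reversal of assignments: if `ω` is symmetric and `m` is a `(P,τ)`-periodic
assignment of a routed network, then the reversed routes, with offsets
`m'_i = -(m_i + λ(r_i))`, form a `(P,τ)`-periodic assignment of the reversed
routed network. -/
theorem reversal_of_assignment {V ι : Type*} [Fintype V] [Fintype ι]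
    (ω : V → V → ℕ) (hsym : ∀ u v : V, ω u v = ω v u)
    (routes : ι → List V) (hnd : ∀ i, (routes i).Nodup)
    (P τ : ℕ) (hP : 1 ≤ P) (hτ : 1 ≤ τ) (m : ι → ℤ)
    (h : IsPeriodicAssignment ω routes P τ m) :
    IsPeriodicAssignment ω (fun i => (routes i).reverse) P τ
      (fun i => -(m i + (routeLen ω (routes i) : ℤ))) :=
  reversal_of_assignment_general ω hsym routes P τ m h
end
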